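/- For the reduced planar system Σ' = ((C₂Σ² - 1)(3γ + 4(γ-1)C₂Σ - 2) + K(3γ + 2(γ-1)C₂Σ - 2))/(2(γ-1)C₂), K' = 2K(2C₂Σ² + K - 1), with 1 < γ < 2 and C₂ > 0, the point P₁₄ with Σ = -2(γ-1)/(3γ-2) and K = ((2-3γ)² - 8(γ-1)²C₂)/(2-3γ)² is an equilibrium, and the sum of the two Jacobian eigenvalues at P₁₄ equals -1 while their product equals ((64(γ-1)²C₂ - 7(2-3γ)²) · (-1))/(4(3γ-2)²) + 1/4 — equivalently, the eigenvalues are -1/2 ± √(64(γ-1)²C₂ - 7(2-3γ)²)/(2(2-3γ)) up to the stated sign convention; consequently P₁₄ is a local attractor whenever 0 < C₂ < (2-3γ)²/(8(γ-1)²). -/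

import Mathlib

noncomputable section

/-- Σ-component of the reduced system on the invariant set `A = v = 0`. -/
def fred (γ C₂ S K : ℝ) : ℝ :=
  ((C₂ * S ^ 2 - 1) * (3 * γ + 4 * (γ - 1) * C₂ * S - 2) +
    K * (3 * γ + 2 * (γ - 1) * C₂ * S - 2)) / (2 * (γ - 1) * C₂)

/-- K-component of the reduced system on the invariant set `A = v = 0`. -/
def gred (C₂ S K : ℝ) : ℝ := 2 * K * (2 * C₂ * S ^ 2 + K - 1)

/-- Jacobian matrix of the reduced planar system at `(S, K)`. -/
def Jred (γ C₂ S K : ℝ) : Matrix (Fin 2) (Fin 2) ℝ :=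
  !![deriv (fun s => fred γ C₂ s K) S, deriv (fun k => fred γ C₂ S k) K;
     deriv (fun s => gred C₂ s K) S, deriv (fun k => gred C₂ S k) K]

/-!
At `P₁₄` the Jacobian can be computed in closed form: its trace is `-1` and its determinant is
`(8(3γ-2)² - 64(γ-1)²C₂) / (4(3γ-2)²)`, which is positive exactly below the threshold on `C₂`.
An eigenvalue `μ` of a real `2 × 2` matrix with trace `t < 0` and determinant `d > 0` solves
`μ² - tμ + d = 0`; the imaginary part of this equation gives `Im μ = 0` or `Re μ = t/2 < 0`,
and a real root cannot be `≥ 0` because then `μ² - tμ + d > 0`.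
-/

theorem Complex.re_neg_of_sq_sub_mul_add_eq_zero {t d : ℝ} (ht : t < 0) (hd : 0 < d) {μ : ℂ}
    (hμ : μ ^ 2 - t * μ + d = 0) : μ.re < 0 := by
  have hre := congrArg Complex.re hμ
  have him := congrArg Complex.im hμ
  simp only [sq, Complex.add_re, Complex.sub_re, Complex.mul_re, Complex.ofReal_re,
    Complex.ofReal_im, Complex.add_im, Complex.sub_im, Complex.mul_im, Complex.zero_re,
    Complex.zero_im] at hre him
  have him' : μ.im * (2 * μ.re - t) = 0 := by linarith
  rcases mul_eq_zero.mp him' with him0 | hre_eq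
  · rw [him0] at hre
    nlinarith
  · linarith

theorem Matrix.sq_sub_trace_mul_add_det_eq_zero_of_hasEigenvalue
    {A : Matrix (Fin 2) (Fin 2) ℝ} {μ : ℂ}
    (hμ : Module.End.HasEigenvalue (Matrix.toLin' (A.map (algebraMap ℝ ℂ))) μ) :
    μ ^ 2 - A.trace * μ + A.det = 0 := by
  rw [Module.End.hasEigenvalue_iff_isRoot_charpoly, Matrix.charpoly_toLin',
    Matrix.charpoly_fin_two] at hμ
  simpa [Matrix.trace_fin_two, Matrix.det_fin_two] using hμ

theorem Matrix.re_neg_of_hasEigenvalue_of_trace_neg_of_det_pos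
    {A : Matrix (Fin 2) (Fin 2) ℝ} (htr : A.trace < 0) (hdet : 0 < A.det) {μ : ℂ}
    (hμ : Module.End.HasEigenvalue (Matrix.toLin' (A.map (algebraMap ℝ ℂ))) μ) : μ.re < 0 :=
  Complex.re_neg_of_sq_sub_mul_add_eq_zero htr hdet
    (Matrix.sq_sub_trace_mul_add_det_eq_zero_of_hasEigenvalue hμ)

section Jacobian

variable (γ C₂ S K : ℝ)

theorem hasDerivAt_fred_sigma : HasDerivAt (fun s => fred γ C₂ s K)
    ((2 * C₂ * S * (3 * γ + 4 * (γ - 1) * C₂ * S - 2) +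
      4 * (γ - 1) * C₂ * (C₂ * S ^ 2 - 1) + 2 * (γ - 1) * C₂ * K) / (2 * (γ - 1) * C₂)) S := by
  have hs := hasDerivAt_id S
  exact ((((hs.pow 2).const_mul C₂).sub_const 1).mul
    (((hs.const_mul (4 * (γ - 1) * C₂)).const_add (3 * γ)).sub_const 2) |>.add
    ((((hs.const_mul (2 * (γ - 1) * C₂)).const_add (3 * γ)).sub_const 2).const_mul K)
    |>.div_const _).congr_deriv (by
      simp only [Nat.cast_ofNat, id_eq, Nat.add_one_sub_one, pow_one, mul_one, Pi.pow_apply]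
      ring)

theorem hasDerivAt_fred_k : HasDerivAt (fun k => fred γ C₂ S k)
    ((3 * γ + 2 * (γ - 1) * C₂ * S - 2) / (2 * (γ - 1) * C₂)) K :=
  (((hasDerivAt_id K).mul_const (3 * γ + 2 * (γ - 1) * C₂ * S - 2)).const_add _
    |>.div_const _).congr_deriv (by simp)

theorem hasDerivAt_gred_sigma : HasDerivAt (fun s => gred C₂ s K) (8 * C₂ * K * S) S :=
  ((((hasDerivAt_id S).pow 2).const_mul (2 * C₂)).add_const K |>.sub_const 1
    |>.const_mul (2 * K)).congr_deriv (by
      simp only [Nat.cast_ofNat, id_eq, Nat.add_one_sub_one, pow_one, mul_one]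
      ring)

theorem hasDerivAt_gred_k :
    HasDerivAt (fun k => gred C₂ S k) (4 * C₂ * S ^ 2 + 4 * K - 2) K := by
  have hk := hasDerivAt_id K
  exact ((hk.const_mul 2).mul ((hk.const_add (2 * C₂ * S ^ 2)).sub_const 1)).congr_deriv (by
    simp only [mul_one, id_eq]
    ring)

theorem Jred_eq : Jred γ C₂ S K =
    !![(2 * C₂ * S * (3 * γ + 4 * (γ - 1) * C₂ * S - 2) +
        4 * (γ - 1) * C₂ * (C₂ * S ^ 2 - 1) + 2 * (γ - 1) * C₂ * K) / (2 * (γ - 1) * C₂),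
      (3 * γ + 2 * (γ - 1) * C₂ * S - 2) / (2 * (γ - 1) * C₂);
      8 * C₂ * K * S, 4 * C₂ * S ^ 2 + 4 * K - 2] := by
  rw [Jred, (hasDerivAt_fred_sigma γ C₂ S K).deriv, (hasDerivAt_fred_k γ C₂ S K).deriv,
    (hasDerivAt_gred_sigma C₂ S K).deriv, (hasDerivAt_gred_k C₂ S K).deriv]

end Jacobian

def sigmaP14 (γ : ℝ) : ℝ := -2 * (γ - 1) / (3 * γ - 2)

def kP14 (γ C₂ : ℝ) : ℝ := ((2 - 3 * γ) ^ 2 - 8 * (γ - 1) ^ 2 * C₂) / (2 - 3 * γ) ^ 2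

section P14

variable {γ C₂ : ℝ}

-- `field_simp` normalizes `3 * γ - 2` to `γ * 3 - 2`, and needs the side condition in that form.
theorem fred_P14 (hγ : 3 * γ - 2 ≠ 0) : fred γ C₂ (sigmaP14 γ) (kP14 γ C₂) = 0 := by
  rw [fred, sigmaP14, kP14, sub_sq_comm 2]
  refine div_eq_zero_iff.mpr (Or.inl ?_)
  field_simp [mul_comm 3 γ ▸ hγ]
  ring

theorem gred_P14 (hγ : 3 * γ - 2 ≠ 0) : gred C₂ (sigmaP14 γ) (kP14 γ C₂) = 0 := by
  rw [gred, sigmaP14, kP14, sub_sq_comm 2]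
  field_simp [mul_comm 3 γ ▸ hγ]
  ring

theorem trace_Jred_P14 (hγ : 1 < γ) (hC : C₂ ≠ 0) :
    (Jred γ C₂ (sigmaP14 γ) (kP14 γ C₂)).trace = -1 := by
  have h₁ : γ - 1 ≠ 0 := by linarith
  have h₂ : γ * 3 - 2 ≠ 0 := by linarith
  rw [Jred_eq, Matrix.trace_fin_two_of, sigmaP14, kP14, sub_sq_comm 2]
  field_simp
  ring

theorem det_Jred_P14 (hγ : 1 < γ) (hC : C₂ ≠ 0) :
    (Jred γ C₂ (sigmaP14 γ) (kP14 γ C₂)).det =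
      (8 * (3 * γ - 2) ^ 2 - 64 * (γ - 1) ^ 2 * C₂) / (4 * (3 * γ - 2) ^ 2) := by
  have h₁ : γ - 1 ≠ 0 := by linarith
  have h₂ : γ * 3 - 2 ≠ 0 := by linarith
  rw [Jred_eq, Matrix.det_fin_two_of, sigmaP14, kP14, sub_sq_comm 2]
  field_simp
  ring

end P14

theorem P14_trace_det_attractor_general (γ C₂ : ℝ) (hγ₁ : 1 < γ) (hC : 0 < C₂) :
    letI S₀ : ℝ := -2 * (γ - 1) / (3 * γ - 2)
    letI K₀ : ℝ := ((2 - 3 * γ) ^ 2 - 8 * (γ - 1) ^ 2 * C₂) / (2 - 3 * γ) ^ 2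
    fred γ C₂ S₀ K₀ = 0 ∧ gred C₂ S₀ K₀ = 0 ∧
    Matrix.trace (Jred γ C₂ S₀ K₀) = -1 ∧
    (Jred γ C₂ S₀ K₀).det =
      (64 * (γ - 1) ^ 2 * C₂ - 7 * (2 - 3 * γ) ^ 2) * (-1) / (4 * (3 * γ - 2) ^ 2)
        + 1 / 4 ∧
    (C₂ < (2 - 3 * γ) ^ 2 / (8 * (γ - 1) ^ 2) →
      ∀ μ : ℂ,
        Module.End.HasEigenvalue
          (Matrix.toLin' ((Jred γ C₂ S₀ K₀).map (algebraMap ℝ ℂ))) μ → μ.re < 0) := by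
  rw [← sigmaP14, ← kP14]
  have htr := trace_Jred_P14 hγ₁ hC.ne'
  have hdet := det_Jred_P14 hγ₁ hC.ne'
  have h₂ : 3 * γ - 2 ≠ 0 := by linarith
  refine ⟨fred_P14 h₂, gred_P14 h₂, htr, ?_, fun hC₂ _ hμ => ?_⟩
  · rw [hdet]
    field_simp
    ring
  · have hC₂' : 64 * (γ - 1) ^ 2 * C₂ < 8 * (3 * γ - 2) ^ 2 := by
      rw [sub_sq_comm, lt_div_iff₀ (by positivity)] at hC₂
      linarith
    refine Matrix.re_neg_of_hasEigenvalue_of_trace_neg_of_det_pos (by rw [htr]; norm_num) ?_ hμ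
    rw [hdet]
    exact div_pos (by linarith) (by positivity)

/-- The equilibrium `P₁₄ : Σ = -2(γ-1)/(3γ-2)`, `K = ((2-3γ)² - 8(γ-1)²C₂)/(2-3γ)²`
of the reduced system has Jacobian whose eigenvalues sum to `-1` (trace) and whose
product (determinant) is `(64(γ-1)²C₂ - 7(2-3γ)²)·(-1)/(4(3γ-2)²) + 1/4`; and it is
a local attractor (all eigenvalues have negative real part) whenever
`0 < C₂ < (2-3γ)²/(8(γ-1)²)`. -/
theorem P14_trace_det_attractor (γ C₂ : ℝ) (hγ₁ : 1 < γ) (hγ₂ : γ < 2) (hC : 0 < C₂) :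
    letI S₀ : ℝ := -2 * (γ - 1) / (3 * γ - 2)
    letI K₀ : ℝ := ((2 - 3 * γ) ^ 2 - 8 * (γ - 1) ^ 2 * C₂) / (2 - 3 * γ) ^ 2
    fred γ C₂ S₀ K₀ = 0 ∧ gred C₂ S₀ K₀ = 0 ∧
    Matrix.trace (Jred γ C₂ S₀ K₀) = -1 ∧
    (Jred γ C₂ S₀ K₀).det =
      (64 * (γ - 1) ^ 2 * C₂ - 7 * (2 - 3 * γ) ^ 2) * (-1) / (4 * (3 * γ - 2) ^ 2)
        + 1 / 4 ∧
    (C₂ < (2 - 3 * γ) ^ 2 / (8 * (γ - 1) ^ 2) →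
      ∀ μ : ℂ,
        Module.End.HasEigenvalue
          (Matrix.toLin' ((Jred γ C₂ S₀ K₀).map (algebraMap ℝ ℂ))) μ → μ.re < 0) :=
  P14_trace_det_attractor_general γ C₂ hγ₁ hC
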